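/- Fix y ∈ ℝ, τ ∈ (0,1), m ∈ ℝ and ν > 0, and let w(η) = |τ − 1_{(y−η) ≤ 0}|, i.e. w(η) = τ if η < y and w(η) = 1 − τ if η ≥ y. Writing W = τ Φ(y; m, ν²) + (1 − τ)(1 − Φ(y; m, ν²)), the expectile regression loss satisfies ∫ (1/2)(y − η)² w(η) φ(η; m, ν²) dη = (1/2)[(y − m)² + ν²] W + (1/2)(2τ − 1)(y − m) ν² φ(y; m, ν²). -/

import Mathlib

open MeasureTheory Real Filter

/-- Gaussian density with mean `m` and variance `ν ^ 2`, evaluated at `x`: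
`φ(x; m, ν²) = (2πν²)^{-1/2} exp(−(x−m)²/(2ν²))`. -/
noncomputable def gpdf (m ν x : ℝ) : ℝ :=
  (Real.sqrt (2 * Real.pi * ν ^ 2))⁻¹ * Real.exp (-((x - m) ^ 2) / (2 * ν ^ 2))

/-- Gaussian cumulative distribution function with mean `m` and variance `ν ^ 2`:
`Φ(c; m, ν²) = ∫_{−∞}^{c} φ(η; m, ν²) dη`. -/
noncomputable def gcdf (m ν c : ℝ) : ℝ := ∫ x in Set.Iio c, gpdf m ν x

/-!
The density satisfies `φ' = -(x - m) / ν² · φ`, from which one checks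
`(y - x)² φ = ((y - m)² + ν²) φ + (ν² (2y - m - x) φ)'`.
The primitive `ν² (2y - m - x) φ` vanishes at `±∞`, so each of the two truncated second moments
`∫_{x < y} (y - x)² φ` and `∫_{x ≥ y} (y - x)² φ` is `(y - m)² + ν²` times a Gaussian tail
probability, plus or minus `ν² (y - m) φ(y)`. The expectile weight is constant on each half-line.
-/

open Set Topology

lemma integral_ite_lt_mul {g : ℝ → ℝ} (hg : Integrable g) (y a b : ℝ) :
    ∫ x, (if x < y then a else b) * g x = a * (∫ x in Iio y, g x) + b * ∫ x in Ici y, g x := by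
  have hIio : EqOn (fun x => a * g x) (fun x => (if x < y then a else b) * g x) (Iio y) :=
    fun x (hx : x < y) => by simp only [if_pos hx]
  have hIci : EqOn (fun x => b * g x) (fun x => (if x < y then a else b) * g x) (Ici y) :=
    fun x (hx : y ≤ x) => by simp only [if_neg (not_lt.2 hx)]
  rw [← intervalIntegral.integral_Iio_add_Ici
      ((hg.const_mul a).integrableOn.congr_fun hIio measurableSet_Iio)
      ((hg.const_mul b).integrableOn.congr_fun hIci measurableSet_Ici),
    ← setIntegral_congr_fun measurableSet_Iio hIio, ← setIntegral_congr_fun measurableSet_Ici hIci,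
    integral_const_mul, integral_const_mul]

section Gaussian

variable {m ν : ℝ}

lemma gpdf_eq_gaussianPDFReal (m ν : ℝ) :
    gpdf m ν = ProbabilityTheory.gaussianPDFReal m ⟨ν ^ 2, sq_nonneg ν⟩ := by
  ext x
  simp only [gpdf, neg_div, ProbabilityTheory.gaussianPDFReal]
  rfl

lemma gpdf_eq_mul_exp (m ν x : ℝ) :
    gpdf m ν x = (√(2 * π * ν ^ 2))⁻¹ * exp (-(2 * ν ^ 2)⁻¹ * (x - m) ^ 2) := by
  rw [gpdf, neg_div, div_eq_inv_mul, neg_mul]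

lemma integrable_gpdf (m ν : ℝ) : Integrable (gpdf m ν) := by
  rw [gpdf_eq_gaussianPDFReal]
  exact ProbabilityTheory.integrable_gaussianPDFReal m _

lemma integral_gpdf (hν : 0 < ν) : ∫ x, gpdf m ν x = 1 := by
  rw [gpdf_eq_gaussianPDFReal]
  exact ProbabilityTheory.integral_gaussianPDFReal_eq_one m
    fun h => (pow_pos hν 2).ne' (congrArg Subtype.val h)

lemma integral_Ici_gpdf (hν : 0 < ν) (c : ℝ) : ∫ x in Ici c, gpdf m ν x = 1 - gcdf m ν c := by
  rw [gcdf, ← integral_gpdf hν, ← intervalIntegral.integral_Iio_add_Ici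
    (integrable_gpdf m ν).integrableOn (integrable_gpdf m ν).integrableOn]
  ring

lemma hasDerivAt_gpdf (hν : 0 < ν) (x : ℝ) :
    HasDerivAt (gpdf m ν) (-(x - m) / ν ^ 2 * gpdf m ν x) x := by
  have hexp : HasDerivAt (fun x => -((x - m) ^ 2) / (2 * ν ^ 2)) (-(x - m) / ν ^ 2) x := by
    refine ((((hasDerivAt_id' x).sub_const m).pow 2).neg.div_const _).congr_deriv ?_
    field_simp
    ring
  refine (hexp.exp.const_mul _).congr_deriv ?_
  rw [gpdf]
  ring

lemma integrable_pow_mul_gpdf (hν : 0 < ν) (n : ℕ) :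
    Integrable fun x => (x - m) ^ n * gpdf m ν x := by
  have hb : 0 < (2 * ν ^ 2)⁻¹ := by positivity
  have hn : (-1 : ℝ) < n := neg_one_lt_zero.trans_le n.cast_nonneg
  have h := ((integrable_rpow_mul_exp_neg_mul_sq hb hn).comp_sub_right m).const_mul
    (√(2 * π * ν ^ 2))⁻¹
  refine h.congr (ae_of_all _ fun x => ?_)
  simp only [gpdf_eq_mul_exp, rpow_natCast]
  ring

lemma tendsto_pow_mul_gpdf_cocompact (hν : 0 < ν) (n : ℕ) :
    Tendsto (fun x => (x - m) ^ n * gpdf m ν x) (cocompact ℝ) (𝓝 0) := by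
  have hb : 0 < (2 * ν ^ 2)⁻¹ := by positivity
  have h := ((tendsto_rpow_abs_mul_exp_neg_mul_sq_cocompact hb n).comp
    (Homeomorph.subRight m).isClosedEmbedding.tendsto_cocompact).const_mul (√(2 * π * ν ^ 2))⁻¹
  rw [mul_zero] at h
  refine tendsto_zero_iff_norm_tendsto_zero.2 (h.congr fun x => ?_)
  simp only [Function.comp_apply, Homeomorph.subRight_apply, gpdf_eq_mul_exp, norm_mul, norm_pow,
    norm_eq_abs, abs_of_pos (exp_pos _), abs_of_nonneg (inv_nonneg.2 (sqrt_nonneg _)), rpow_natCast]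
  ring

lemma integrable_sq_mul_gpdf (hν : 0 < ν) (y : ℝ) :
    Integrable fun x => (y - x) ^ 2 * gpdf m ν x := by
  have h := (((integrable_pow_mul_gpdf (m := m) hν 0).const_mul ((y - m) ^ 2)).sub
    ((integrable_pow_mul_gpdf (m := m) hν 1).const_mul (2 * (y - m)))).add
    (integrable_pow_mul_gpdf (m := m) hν 2)
  refine h.congr (ae_of_all _ fun x => ?_)
  simp only [Pi.add_apply, Pi.sub_apply]
  ring

lemma hasDerivAt_linear_mul_gpdf (hν : 0 < ν) (y x : ℝ) :
    HasDerivAt (fun x => ν ^ 2 * ((2 * y - m - x) * gpdf m ν x))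
      ((y - x) ^ 2 * gpdf m ν x - ((y - m) ^ 2 + ν ^ 2) * gpdf m ν x) x := by
  have hlin : HasDerivAt (fun x => 2 * y - m - x) (-1) x := by
    simpa using (hasDerivAt_id x).const_sub (2 * y - m)
  refine ((hlin.mul (hasDerivAt_gpdf hν x)).const_mul (ν ^ 2)).congr_deriv ?_
  field_simp
  ring

lemma tendsto_linear_mul_gpdf_cocompact (hν : 0 < ν) (y : ℝ) :
    Tendsto (fun x => ν ^ 2 * ((2 * y - m - x) * gpdf m ν x)) (cocompact ℝ) (𝓝 0) := by
  have h := (((tendsto_pow_mul_gpdf_cocompact (m := m) hν 0).const_mul (2 * (y - m))).sub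
    (tendsto_pow_mul_gpdf_cocompact (m := m) hν 1)).const_mul (ν ^ 2)
  simp only [mul_zero, sub_zero] at h
  exact h.congr fun x => by ring

lemma integral_Iio_sq_mul_gpdf (hν : 0 < ν) (y : ℝ) :
    ∫ x in Iio y, (y - x) ^ 2 * gpdf m ν x
      = ((y - m) ^ 2 + ν ^ 2) * gcdf m ν y + ν ^ 2 * (y - m) * gpdf m ν y := by
  have hsq := integrable_sq_mul_gpdf (m := m) hν y
  have hc := (integrable_gpdf m ν).const_mul ((y - m) ^ 2 + ν ^ 2)
  have h := integral_Iic_of_hasDerivAt_of_tendsto' (a := y)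
    (fun x _ => hasDerivAt_linear_mul_gpdf hν y x) (hsq.sub hc).integrableOn
    ((tendsto_linear_mul_gpdf_cocompact hν y).mono_left atBot_le_cocompact)
  rw [integral_Iic_eq_integral_Iio, integral_sub hsq.integrableOn hc.integrableOn,
    integral_const_mul] at h
  rw [gcdf]
  linear_combination h

lemma integral_Ici_sq_mul_gpdf (hν : 0 < ν) (y : ℝ) :
    ∫ x in Ici y, (y - x) ^ 2 * gpdf m ν x
      = ((y - m) ^ 2 + ν ^ 2) * (1 - gcdf m ν y) - ν ^ 2 * (y - m) * gpdf m ν y := by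
  have hsq := integrable_sq_mul_gpdf (m := m) hν y
  have hc := (integrable_gpdf m ν).const_mul ((y - m) ^ 2 + ν ^ 2)
  have h := integral_Ioi_of_hasDerivAt_of_tendsto' (a := y)
    (fun x _ => hasDerivAt_linear_mul_gpdf hν y x) (hsq.sub hc).integrableOn
    ((tendsto_linear_mul_gpdf_cocompact hν y).mono_left atTop_le_cocompact)
  rw [← integral_Ici_eq_integral_Ioi, integral_sub hsq.integrableOn hc.integrableOn,
    integral_const_mul, integral_Ici_gpdf hν] at h
  linear_combination h

end Gaussian

theorem expectile_Psi0_general (y τ m ν : ℝ) (hν : 0 < ν) :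
    ∫ η, (1 / 2) * (y - η) ^ 2 * (if η < y then τ else 1 - τ) * gpdf m ν η
      = (1 / 2) * ((y - m) ^ 2 + ν ^ 2)
          * (τ * gcdf m ν y + (1 - τ) * (1 - gcdf m ν y))
        + (1 / 2) * (2 * τ - 1) * (y - m) * ν ^ 2 * gpdf m ν y := by
  have hweight : (fun η => (1 / 2) * (y - η) ^ 2 * (if η < y then τ else 1 - τ) * gpdf m ν η)
      = fun η => (if η < y then τ / 2 else (1 - τ) / 2) * ((y - η) ^ 2 * gpdf m ν η) := by
    ext η
    split_ifs <;> ring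
  rw [hweight, integral_ite_lt_mul (integrable_sq_mul_gpdf hν y), integral_Iio_sq_mul_gpdf hν,
    integral_Ici_sq_mul_gpdf hν]
  ring

theorem expectile_Psi0 (y τ m ν : ℝ) (hτ : τ ∈ Set.Ioo (0 : ℝ) 1) (hν : 0 < ν) :
    ∫ η, (1 / 2) * (y - η) ^ 2 * (if η < y then τ else 1 - τ) * gpdf m ν η
      = (1 / 2) * ((y - m) ^ 2 + ν ^ 2)
          * (τ * gcdf m ν y + (1 - τ) * (1 - gcdf m ν y))
        + (1 / 2) * (2 * τ - 1) * (y - m) * ν ^ 2 * gpdf m ν y :=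
  expectile_Psi0_general y τ m ν hν
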